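/- For d ≥ 3, let b, w, e, e', β denote respectively the numbers of black vertices, white vertices, edges, white-white edges, and buds of a d-branching mobile. Then e - e' + β = d·b, (d-2)·e = d·w, and b + w = e + 1; consequently b = (2/d)·e + 1 and the excess e + e' - β equals -d. -/

import Mathlib

open Finset

/-- A combinatorial model of a weighted mobile: a finite plane tree with vertices colored
black (`black v = true`) or white, a number `buds v` of dangling buds at each (black)
vertex, and an ℕ-weight on each of the two half-edges of each edge.  The ℕ-mobile
conditions require weights to be positive at white endpoints and zero at black
endpoints. -/
structure Mobile where
  V : Type
  E : Type
  [fintypeV : Fintype V]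
  [fintypeE : Fintype E]
  [decV : DecidableEq V]
  [decE : DecidableEq E]
  ends : E → V × V
  black : V → Bool
  buds : V → ℕ
  w : E → ℕ × ℕ
  connected : ∀ x y : V,
    Relation.ReflTransGen (fun a b => ∃ e, ends e = (a, b) ∨ ends e = (b, a)) x y
  treeCard : Fintype.card V = Fintype.card E + 1
  budsOnlyBlack : ∀ v, black v = false → buds v = 0
  posWhite : ∀ e, (black (ends e).1 = false → 0 < (w e).1) ∧
    (black (ends e).2 = false → 0 < (w e).2)
  zeroBlack : ∀ e, (black (ends e).1 = true → (w e).1 = 0) ∧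
    (black (ends e).2 = true → (w e).2 = 0)

attribute [instance] Mobile.fintypeV Mobile.fintypeE Mobile.decV Mobile.decE

/-- Degree of a vertex, counting buds. -/
def Mobile.degree (M : Mobile) (v : M.V) : ℕ :=
  M.buds v + ∑ e : M.E, ((if (M.ends e).1 = v then 1 else 0) +
    (if (M.ends e).2 = v then 1 else 0))

/-- Weight of a vertex: sum of the weights of its incident (non-bud) half-edges. -/
def Mobile.vertexWeight (M : Mobile) (v : M.V) : ℕ :=
  ∑ e : M.E, ((if (M.ends e).1 = v then (M.w e).1 else 0) +
    (if (M.ends e).2 = v then (M.w e).2 else 0))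

/-- Weight of an edge: sum of the weights of its two half-edges. -/
def Mobile.edgeWeight (M : Mobile) (e : M.E) : ℕ := (M.w e).1 + (M.w e).2

/-- Number of edges. -/
def Mobile.numEdges (M : Mobile) : ℕ := Fintype.card M.E

/-- Number of white-white edges. -/
def Mobile.numWW (M : Mobile) : ℕ :=
  (univ.filter (fun e : M.E =>
    M.black (M.ends e).1 = false ∧ M.black (M.ends e).2 = false)).card

/-- Total number of buds. -/
def Mobile.numBuds (M : Mobile) : ℕ := ∑ v : M.V, M.buds v

/-- Number of black vertices. -/
def Mobile.numBlack (M : Mobile) : ℕ := (univ.filter (fun v : M.V => M.black v = true)).card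

/-- Number of white vertices. -/
def Mobile.numWhite (M : Mobile) : ℕ := (univ.filter (fun v : M.V => M.black v = false)).card

/-- The excess of a mobile: number of edges plus number of white-white edges minus the
number of buds. -/
def Mobile.excess (M : Mobile) : ℤ :=
  (M.numEdges : ℤ) + (M.numWW : ℤ) - (M.numBuds : ℤ)

/-- A `d`-branching mobile: every black vertex has degree `d`, every white vertex has
weight `d`, and every edge has weight `d - 2`. -/
def Mobile.IsDBranching (M : Mobile) (d : ℕ) : Prop :=
  (∀ v, M.black v = true → M.degree v = d) ∧
  (∀ v, M.black v = false → M.vertexWeight v = d) ∧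
  (∀ e, M.edgeWeight e = d - 2)

/-! Double counting. Summing degrees over the black vertices counts all buds and every edge
with a black end; since half-edge weights vanish at black ends, an edge of weight `d - 2 > 0`
has at most one black end, so these are exactly the edges that are not white-white. Summing
weights over the white vertices counts every edge weight once, for the same reason. Together
with the tree relation, eliminating `w` gives `d·b = 2e + d`, and then the excess is `-d`. -/

namespace Mobile

variable (M : Mobile)

theorem numBlack_add_numWhite : M.numBlack + M.numWhite = M.numEdges + 1 := by
  have h := card_filter_add_card_filter_not (s := univ) (p := fun v : M.V => M.black v = true)
  simpa [numBlack, numWhite, numEdges, M.treeCard] using h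

theorem not_black_and_black_of_edgeWeight_pos {e : M.E} (he : 0 < M.edgeWeight e) :
    ¬ (M.black (M.ends e).1 = true ∧ M.black (M.ends e).2 = true) := by
  rintro ⟨h₁, h₂⟩
  simp [edgeWeight, (M.zeroBlack e).1 h₁, (M.zeroBlack e).2 h₂] at he

theorem sum_degree_black :
    ∑ v ∈ univ.filter (fun v => M.black v = true), M.degree v =
      M.numBuds + ∑ e : M.E, ((if M.black (M.ends e).1 = true then 1 else 0) +
        (if M.black (M.ends e).2 = true then 1 else 0)) := by
  simp only [degree]
  rw [sum_add_distrib]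
  congr 1
  · refine sum_subset (filter_subset _ _) fun v _ hv => M.budsOnlyBlack v ?_
    simpa using hv
  · rw [sum_comm]
    apply sum_congr rfl
    intro e _
    rw [sum_add_distrib, sum_ite_eq, sum_ite_eq]
    simp

theorem sum_vertexWeight_white :
    ∑ v ∈ univ.filter (fun v => M.black v = false), M.vertexWeight v =
      ∑ e : M.E, M.edgeWeight e := by
  have h₁ : ∀ e, (if M.black (M.ends e).1 = false then (M.w e).1 else 0) = (M.w e).1 := by
    intro e
    cases hb : M.black (M.ends e).1 <;> simp [(M.zeroBlack e).1, hb]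
  have h₂ : ∀ e, (if M.black (M.ends e).2 = false then (M.w e).2 else 0) = (M.w e).2 := by
    intro e
    cases hb : M.black (M.ends e).2 <;> simp [(M.zeroBlack e).2, hb]
  simp only [vertexWeight, edgeWeight]
  rw [sum_comm]
  simp [sum_add_distrib, sum_ite_eq, h₁, h₂]

theorem numWW_add_sum_black_ends
    (hBB : ∀ e, ¬ (M.black (M.ends e).1 = true ∧ M.black (M.ends e).2 = true)) :
    M.numWW + ∑ e : M.E, ((if M.black (M.ends e).1 = true then 1 else 0) +
        (if M.black (M.ends e).2 = true then 1 else 0)) = M.numEdges := by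
  rw [numWW, card_filter, ← sum_add_distrib, numEdges, ← card_univ, card_eq_sum_ones]
  refine sum_congr rfl fun e _ => ?_
  have := hBB e
  cases h₁ : M.black (M.ends e).1 <;> cases h₂ : M.black (M.ends e).2 <;> simp_all

variable {M} {d : ℕ}

theorem IsDBranching.mul_numBlack_add_numWW (h : M.IsDBranching d) (hd : 3 ≤ d) :
    d * M.numBlack + M.numWW = M.numBuds + M.numEdges := by
  have hBB e := M.not_black_and_black_of_edgeWeight_pos (e := e) (by rw [h.2.2 e]; omega)
  have hdeg : ∑ v ∈ univ.filter (fun v => M.black v = true), M.degree v = d * M.numBlack := by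
    rw [sum_congr rfl fun v hv => h.1 v (mem_filter.1 hv).2, sum_const, smul_eq_mul, mul_comm,
      numBlack]
  rw [← hdeg, sum_degree_black, ← M.numWW_add_sum_black_ends hBB]
  ring

theorem IsDBranching.mul_numWhite (h : M.IsDBranching d) :
    d * M.numWhite = (d - 2) * M.numEdges := by
  have hwt : ∑ v ∈ univ.filter (fun v => M.black v = false), M.vertexWeight v =
      d * M.numWhite := by
    rw [sum_congr rfl fun v hv => h.2.1 v (mem_filter.1 hv).2, sum_const, smul_eq_mul,
      mul_comm, numWhite]
  rw [← hwt, sum_vertexWeight_white, sum_congr rfl fun e _ => h.2.2 e, sum_const, smul_eq_mul,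
    card_univ, numEdges, mul_comm]

end Mobile

/-- For `d ≥ 3`, let `b, w, e, e', β` be the numbers of black
vertices, white vertices, edges, white-white edges and buds of a `d`-branching mobile.
Then `e - e' + β = d·b`, `(d-2)·e = d·w`, `b + w = e + 1`; consequently `d·b = 2e + d`
(i.e. `b = (2/d)e + 1`) and the excess `e + e' - β` equals `-d`. -/
theorem stmt14 (M : Mobile) (d : ℕ) (hd : 3 ≤ d) (h : M.IsDBranching d) :
    ((M.numEdges : ℤ) - (M.numWW : ℤ) + (M.numBuds : ℤ) = (d : ℤ) * M.numBlack) ∧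
    (((d : ℤ) - 2) * M.numEdges = (d : ℤ) * M.numWhite) ∧
    ((M.numBlack : ℤ) + (M.numWhite : ℤ) = (M.numEdges : ℤ) + 1) ∧
    ((d : ℤ) * M.numBlack = 2 * (M.numEdges : ℤ) + d) ∧
    M.excess = -(d : ℤ) := by
  have hblack : (d : ℤ) * M.numBlack + M.numWW = M.numBuds + M.numEdges := by
    exact_mod_cast h.mul_numBlack_add_numWW hd
  have hwhite : (d : ℤ) * M.numWhite = (d - 2) * M.numEdges := by
    rw [← Nat.cast_ofNat, ← Nat.cast_sub (by omega)]
    exact_mod_cast h.mul_numWhite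
  have htree : (M.numBlack : ℤ) + M.numWhite = M.numEdges + 1 := by
    exact_mod_cast M.numBlack_add_numWhite
  have hcount : (d : ℤ) * M.numBlack = 2 * M.numEdges + d := by
    linear_combination (d : ℤ) * htree - hwhite
  refine ⟨by linarith, hwhite.symm, htree, hcount, ?_⟩
  rw [Mobile.excess]
  linarith
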